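/- There exists an absolute constant C > 0 with the following property. Let q be a probability distribution on [n] with ‖q − U_n‖_2 ≥ ε/√n for some ε ∈ (0,1), let m be a real number with m ≥ C·√n/ε², let X_1,…,X_n be independent random variables with X_i distributed as Poi(m·q_i), and let Z = Σ_{i=1}^n ((X_i − m/n)² − X_i). Then E[Z] ≥ 8m/√n and 16·Var[Z] ≤ (E[Z])². -/

import Mathlib

open Finset ProbabilityTheory MeasureTheory

/-- The probability mass that a function on `Fin n` assigns to the (0-indexed)
interval `[a, b)`. -/
noncomputable def intervalMass {n : ℕ} (q : Fin n → ℝ) (a b : ℕ) : ℝ :=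
  ∑ j ∈ Finset.univ.filter (fun j : Fin n => a ≤ (j : ℕ) ∧ (j : ℕ) < b), q j

/-- `q` is a probability distribution on `[n]` (identified with `Fin n`). -/
noncomputable def IsDist {n : ℕ} (q : Fin n → ℝ) : Prop := (∀ i, 0 ≤ q i) ∧ ∑ i, q i = 1

/-- The `A_k` distance between `p` and `q` on `Fin n`: the supremum, over all partitions of
`Fin n` into `k` consecutive intervals (described by their monotone sequence of boundary
points), of the sum of the discrepancies `|p(I) - q(I)|` over the intervals. -/
noncomputable def AkDist (n k : ℕ) (p q : Fin n → ℝ) : ℝ :=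
  sSup { x : ℝ | ∃ b : Fin (k + 1) → ℕ, Monotone b ∧ b 0 = 0 ∧ b (Fin.last k) = n ∧
    x = ∑ i : Fin k,
      |intervalMass p (b i.castSucc) (b i.succ) - intervalMass q (b i.castSucc) (b i.succ)| }

/-- The `L1` distance between two functions on `Fin n`. -/
noncomputable def L1Dist {n : ℕ} (p q : Fin n → ℝ) : ℝ := ∑ i, |p i - q i|

/-- The `L2` distance between two functions on `Fin n`. -/
noncomputable def L2Dist {n : ℕ} (p q : Fin n → ℝ) : ℝ := Real.sqrt (∑ i, (p i - q i) ^ 2)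

/-- The uniform distribution on `Fin n`. -/
noncomputable def unif (n : ℕ) : Fin n → ℝ := fun _ => 1 / n

/-- The probability that the `m`-fold product measure `q^{⊗m}` assigns to a set
`A ⊆ [n]^m` of sample sequences. -/
noncomputable def prodProb {n m : ℕ} (q : Fin n → ℝ) (A : Finset (Fin m → Fin n)) : ℝ :=
  ∑ x ∈ A, ∏ j, q (x j)

/-- The reduced distribution of `q` w.r.t. the partition of `Fin n` into `ℓ` consecutive
intervals of equal length `n / ℓ` (assuming `ℓ ∣ n`). -/
noncomputable def reducedDist {n : ℕ} (q : Fin n → ℝ) (ℓ : ℕ) : Fin ℓ → ℝ :=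
  fun i => intervalMass q ((i : ℕ) * (n / ℓ)) (((i : ℕ) + 1) * (n / ℓ))

/-- `p` is a `t`-piecewise degree-`d` function on `Fin n`: there is a partition of `Fin n`
into `t` consecutive intervals on each of which `p` agrees with a real polynomial of degree
at most `d`. -/
noncomputable def IsPiecewisePoly {n : ℕ} (t d : ℕ) (p : Fin n → ℝ) : Prop :=
  ∃ b : Fin (t + 1) → ℕ, Monotone b ∧ b 0 = 0 ∧ b (Fin.last t) = n ∧
    ∀ i : Fin t, ∃ P : Polynomial ℝ, P.degree ≤ (d : ℕ) ∧
      ∀ x : Fin n, b i.castSucc ≤ (x : ℕ) → (x : ℕ) < b i.succ → p x = P.eval ((x : ℕ) : ℝ)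

/-- `q` is `k`-flat: there is a partition of `Fin n` into `k` consecutive intervals
on each of which `q` is constant. -/
noncomputable def IsKFlat {n : ℕ} (k : ℕ) (q : Fin n → ℝ) : Prop :=
  ∃ b : Fin (k + 1) → ℕ, Monotone b ∧ b 0 = 0 ∧ b (Fin.last k) = n ∧
    ∀ i : Fin k, ∃ c : ℝ, ∀ x : Fin n, b i.castSucc ≤ (x : ℕ) → (x : ℕ) < b i.succ → q x = c

/-- The term `Discr(I)² / width(I)^{1/8}` for the interval `I = [a, b)` in `Fin n`, where
the discrepancy is `Discr(I) = |q(I) - U_n(I)|` and the width is `|I|/n` (relative to the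
uniform distribution `U_n`). -/
noncomputable def ssTerm {n : ℕ} (q : Fin n → ℝ) (a b : ℕ) : ℝ :=
  |intervalMass q a b - ((b - a : ℕ) : ℝ) / n| ^ 2 / (((b - a : ℕ) : ℝ) / n) ^ ((1 : ℝ) / 8)

/-- The squared scale-sensitive-`L2` distance between `q` and the uniform distribution
on `Fin n`, at scale `1/k`: the supremum, over all partitions of `Fin n` into consecutive
nonempty intervals each of width at most `1/k`, of `∑ Discr(I)² / width(I)^{1/8}`. -/
noncomputable def ssDistSq (n k : ℕ) (q : Fin n → ℝ) : ℝ :=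
  sSup { x : ℝ | ∃ r : ℕ, ∃ b : Fin (r + 1) → ℕ, StrictMono b ∧ b 0 = 0 ∧ b (Fin.last r) = n ∧
    (∀ i : Fin r, ((b i.succ - b i.castSucc : ℕ) : ℝ) / n ≤ 1 / k) ∧
    x = ∑ i : Fin r, ssTerm q (b i.castSucc) (b i.succ) }

/-!
For `X ~ Poi(λ)` the falling-factorial moments are `E[X(X-1)⋯(X-j+1)] = λ^j`. Expanding
`Y = (X - c)² - X` and `Y²` in the falling-factorial basis gives `E[Y] = (λ - c)²` and
`Var[Y] = 2λ² + 4λ(λ - c)²`. With `λᵢ = m qᵢ`, `c = m/n` and `Δ = ‖q - U_n‖₂`, independence gives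
`E[Z] = m²Δ²` and `Var[Z] ≤ 2m²(Δ² + 1/n) + 4m³(Δ + 1/n)Δ²`. For `C = 256` the hypotheses force
`mΔ ≥ 256` and `mΔ²√n ≥ 256`, and then each of the four variance terms is at most `E[Z]²/64`.
-/

open Real
open scoped NNReal Nat

theorem Nat.cast_descFactorial_succ {R : Type*} [Ring R] (n k : ℕ) :
    (n.descFactorial (k + 1) : R) = n.descFactorial k * (n - k) := by
  simp only [← descPochhammer_eval_eq_descFactorial, descPochhammer_succ_eval]

namespace ProbabilityTheory

variable (r : ℝ≥0)

theorem hasSum_poisson_mul_descFactorial (j : ℕ) :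
    HasSum (fun n : ℕ => exp (-r) * r ^ n / n ! * n.descFactorial j) ((r : ℝ) ^ j) := by
  have hshift : ∀ n : ℕ, exp (-r) * r ^ (n + j) / (n + j)! * ((n + j).descFactorial j : ℝ)
      = (r : ℝ) ^ j * (exp (-r) * r ^ n / n !) := by
    intro n
    have h := Nat.factorial_mul_descFactorial (Nat.le_add_left j n)
    rw [Nat.add_sub_cancel, ← Nat.cast_inj (R := ℝ), Nat.cast_mul] at h
    field_simp
    rw [← h]
    ring
  rw [← hasSum_nat_add_iff' j, Finset.sum_eq_zero fun i hi => by
    simp [Nat.descFactorial_eq_zero_iff_lt.2 (Finset.mem_range.1 hi)], sub_zero]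
  simpa [hshift] using (hasSum_one_poissonMeasure r).mul_left ((r : ℝ) ^ j)

theorem integrable_descFactorial_poissonMeasure (j : ℕ) :
    Integrable (fun n : ℕ => (n.descFactorial j : ℝ)) (poissonMeasure r) := by
  rw [integrable_poissonMeasure_iff]
  simpa using (hasSum_poisson_mul_descFactorial r j).summable

theorem integral_descFactorial_poissonMeasure (j : ℕ) :
    ∫ n, (n.descFactorial j : ℝ) ∂poissonMeasure r = (r : ℝ) ^ j := by
  rw [integral_poissonMeasure' (integrable_descFactorial_poissonMeasure r j)]
  exact (hasSum_poisson_mul_descFactorial r j).tsum_eq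

variable {k : ℕ} (a : Fin k → ℝ)

theorem integrable_sum_descFactorial_poissonMeasure :
    Integrable (fun n : ℕ => ∑ j, a j * (n.descFactorial j : ℝ)) (poissonMeasure r) :=
  integrable_finsetSum _ fun j _ => (integrable_descFactorial_poissonMeasure r j).const_mul (a j)

theorem integral_sum_descFactorial_poissonMeasure :
    ∫ n, ∑ j, a j * (n.descFactorial j : ℝ) ∂poissonMeasure r = ∑ j, a j * (r : ℝ) ^ (j : ℕ) := by
  rw [integral_finsetSum _ fun j _ => (integrable_descFactorial_poissonMeasure r _).const_mul (a j)]
  simp only [integral_const_mul, integral_descFactorial_poissonMeasure]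

end ProbabilityTheory

section ChiSq

noncomputable def chiSqTerm (c : ℝ) (k : ℕ) : ℝ := ((k : ℝ) - c) ^ 2 - k

theorem chiSqTerm_eq_sum_descFactorial (c : ℝ) (n : ℕ) :
    chiSqTerm c n = ∑ j, ![c ^ 2, -2 * c, 1] j * (n.descFactorial j : ℝ) := by
  simp only [chiSqTerm, Fin.sum_univ_succ, Fin.sum_univ_zero, Matrix.cons_val_zero,
    Matrix.cons_val_succ, Fin.val_zero, Fin.val_succ, Nat.descFactorial_zero,
    Nat.cast_descFactorial_succ, Nat.cast_add, Nat.cast_zero, Nat.cast_one]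
  ring

theorem chiSqTerm_sq_eq_sum_descFactorial (c : ℝ) (n : ℕ) :
    chiSqTerm c n ^ 2 = ∑ j,
      ![c ^ 4, 4 * c ^ 2 - 4 * c ^ 3, 6 * c ^ 2 - 8 * c + 2, 4 - 4 * c, 1] j *
        (n.descFactorial j : ℝ) := by
  simp only [chiSqTerm, Fin.sum_univ_succ, Fin.sum_univ_zero, Matrix.cons_val_zero,
    Matrix.cons_val_succ, Fin.val_zero, Fin.val_succ, Nat.descFactorial_zero,
    Nat.cast_descFactorial_succ, Nat.cast_add, Nat.cast_zero, Nat.cast_one]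
  ring

variable (r : ℝ≥0) (c : ℝ)

theorem integral_chiSqTerm_poissonMeasure :
    ∫ n, chiSqTerm c n ∂poissonMeasure r = ((r : ℝ) - c) ^ 2 := by
  simp only [chiSqTerm_eq_sum_descFactorial, integral_sum_descFactorial_poissonMeasure]
  simp only [Fin.sum_univ_succ, Fin.sum_univ_zero, Matrix.cons_val_zero, Matrix.cons_val_succ,
    Fin.val_zero, Fin.val_succ]
  ring

theorem memLp_chiSqTerm_poissonMeasure : MemLp (chiSqTerm c) 2 (poissonMeasure r) := by
  refine (memLp_two_iff_integrable_sq .of_discrete).2 ?_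
  simp only [chiSqTerm_sq_eq_sum_descFactorial]
  exact integrable_sum_descFactorial_poissonMeasure r _

theorem variance_chiSqTerm_poissonMeasure :
    variance (chiSqTerm c) (poissonMeasure r) = 2 * r ^ 2 + 4 * r * ((r : ℝ) - c) ^ 2 := by
  rw [variance_eq_sub (memLp_chiSqTerm_poissonMeasure r c), integral_chiSqTerm_poissonMeasure]
  simp only [Pi.pow_apply, chiSqTerm_sq_eq_sum_descFactorial,
    integral_sum_descFactorial_poissonMeasure]
  simp only [Fin.sum_univ_succ, Fin.sum_univ_zero, Matrix.cons_val_zero, Matrix.cons_val_succ,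
    Fin.val_zero, Fin.val_succ]
  ring

end ChiSq

section Independent

variable {Ω : Type*} [MeasurableSpace Ω] {μ : Measure Ω} {r : ℝ≥0} {Y : Ω → ℕ}
  (c : ℝ)

theorem ProbabilityTheory.HasLaw.integral_chiSqTerm (hY : HasLaw Y (poissonMeasure r) μ) :
    ∫ ω, chiSqTerm c (Y ω) ∂μ = ((r : ℝ) - c) ^ 2 :=
  (hY.integral_comp .of_discrete).trans (integral_chiSqTerm_poissonMeasure r c)

theorem ProbabilityTheory.HasLaw.memLp_chiSqTerm (hY : HasLaw Y (poissonMeasure r) μ) :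
    MemLp (fun ω => chiSqTerm c (Y ω)) 2 μ :=
  (memLp_map_measure_iff (g := chiSqTerm c) .of_discrete hY.aemeasurable).1
    (hY.map_eq ▸ memLp_chiSqTerm_poissonMeasure r c)

theorem ProbabilityTheory.HasLaw.variance_chiSqTerm (hY : HasLaw Y (poissonMeasure r) μ) :
    variance (fun ω => chiSqTerm c (Y ω)) μ = 2 * r ^ 2 + 4 * r * ((r : ℝ) - c) ^ 2 := by
  rw [← variance_chiSqTerm_poissonMeasure, ← hY.map_eq,
    variance_map .of_discrete hY.aemeasurable]
  rfl

variable {ι : Type*} [Fintype ι] {X : ι → Ω → ℕ} {r : ι → ℝ≥0}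

theorem integral_sum_chiSqTerm [IsFiniteMeasure μ]
    (hX : ∀ i, HasLaw (X i) (poissonMeasure (r i)) μ) :
    ∫ ω, ∑ i, chiSqTerm c (X i ω) ∂μ = ∑ i, ((r i : ℝ) - c) ^ 2 := by
  rw [integral_finsetSum _ fun i _ => ((hX i).memLp_chiSqTerm c).integrable one_le_two]
  exact Finset.sum_congr rfl fun i _ => (hX i).integral_chiSqTerm c

theorem variance_sum_chiSqTerm [IsProbabilityMeasure μ]
    (hX : ∀ i, HasLaw (X i) (poissonMeasure (r i)) μ) (hind : iIndepFun X μ) :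
    variance (fun ω => ∑ i, chiSqTerm c (X i ω)) μ =
      ∑ i, (2 * r i ^ 2 + 4 * r i * ((r i : ℝ) - c) ^ 2) := by
  have hsum := IndepFun.variance_sum (s := Finset.univ)
    (X := fun i ω => chiSqTerm c (X i ω)) (fun i _ => (hX i).memLp_chiSqTerm c)
    fun i _ j _ hij => show IndepFun (chiSqTerm c ∘ X i) (chiSqTerm c ∘ X j) μ from
      (hind.indepFun hij).comp measurable_from_nat measurable_from_nat
  rw [Finset.sum_fn] at hsum
  rw [hsum]
  exact Finset.sum_congr rfl fun i _ => (hX i).variance_chiSqTerm c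

end Independent

section L2Dist

variable {n : ℕ}

theorem L2Dist_sq (p q : Fin n → ℝ) : L2Dist p q ^ 2 = ∑ i, (p i - q i) ^ 2 :=
  sq_sqrt (sum_nonneg fun _ _ => sq_nonneg _)

theorem abs_sub_le_L2Dist (p q : Fin n → ℝ) (i : Fin n) : |p i - q i| ≤ L2Dist p q :=
  abs_le_sqrt (single_le_sum (f := fun i => (p i - q i) ^ 2) (fun _ _ => sq_nonneg _) (mem_univ i))

variable (q : Fin n → ℝ)

theorem sum_sq_eq_L2Dist_unif_sq_add (hq : ∑ i, q i = 1) :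
    ∑ i, q i ^ 2 = L2Dist q (unif n) ^ 2 + 1 / n := by
  simp only [L2Dist_sq, unif, sub_sq, sum_add_distrib, sum_sub_distrib, ← sum_mul, ← mul_sum,
    hq, sum_const, card_univ, Fintype.card_fin, nsmul_eq_mul]
  rcases n.eq_zero_or_pos with rfl | hn
  · simp
  · field_simp
    ring

theorem sum_sq_mul_sub_div_eq (m : ℝ) :
    ∑ i, (m * q i - m / n) ^ 2 = m ^ 2 * L2Dist q (unif n) ^ 2 := by
  rw [L2Dist_sq, mul_sum]
  exact sum_congr rfl fun i _ => by simp only [unif]; ring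

theorem sum_mul_sq_sub_unif_le :
    ∑ i, q i * (q i - 1 / n) ^ 2 ≤ (L2Dist q (unif n) + 1 / n) * L2Dist q (unif n) ^ 2 := by
  rw [L2Dist_sq, mul_sum]
  refine sum_le_sum fun i _ => mul_le_mul_of_nonneg_right ?_ (sq_nonneg _)
  have := (abs_le.1 (abs_sub_le_L2Dist q (unif n) i)).2
  simp only [unif] at this ⊢
  linarith

theorem sum_chiSq_variance_le {m : ℝ} (hm : 0 ≤ m) (hq : ∑ i, q i = 1) :
    ∑ i, (2 * (m * q i) ^ 2 + 4 * (m * q i) * (m * q i - m / n) ^ 2) ≤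
      2 * m ^ 2 * (L2Dist q (unif n) ^ 2 + 1 / n) +
        4 * m ^ 3 * ((L2Dist q (unif n) + 1 / n) * L2Dist q (unif n) ^ 2) := by
  have h : ∀ i, 2 * (m * q i) ^ 2 + 4 * (m * q i) * (m * q i - m / n) ^ 2 =
      2 * m ^ 2 * q i ^ 2 + 4 * m ^ 3 * (q i * (q i - 1 / n) ^ 2) := fun i => by ring
  simp only [h, sum_add_distrib, ← mul_sum, sum_sq_eq_L2Dist_unif_sq_add q hq]
  gcongr
  exact sum_mul_sq_sub_unif_le q

end L2Dist

theorem chiSq_rate_bounds {n ε m L : ℝ} (hn : 1 ≤ n) (hε : 0 < ε) (hε1 : ε < 1)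
    (hL : ε / √n ≤ L) (hm : 256 * √n / ε ^ 2 ≤ m) :
    256 ≤ m * L ∧ 256 ≤ m * L ^ 2 * √n := by
  have hs : 1 ≤ √n := one_le_sqrt.2 hn
  have hεL : ε ≤ L * √n := (div_le_iff₀ (by positivity)).1 hL
  have hmε : 256 * √n ≤ m * ε ^ 2 := (div_le_iff₀ (by positivity)).1 hm
  have hm0 : 0 < m := lt_of_lt_of_le (by positivity) hm
  constructor
  · nlinarith [mul_le_mul_of_nonneg_left hεL hm0.le, mul_le_mul_of_nonneg_left hε1.le hm0.le]
  · nlinarith [mul_le_mul_of_nonneg_left hεL hm0.le]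

theorem sixteen_mul_chiSq_variance_bound_le {n m L : ℝ} (hn : 1 ≤ n) (h1 : 256 ≤ m * L)
    (h2 : 256 ≤ m * L ^ 2 * √n) :
    16 * (2 * m ^ 2 * (L ^ 2 + 1 / n) + 4 * m ^ 3 * ((L + 1 / n) * L ^ 2)) ≤
      (m ^ 2 * L ^ 2) ^ 2 := by
  have hn0 : 0 < n := by linarith
  have hm : 0 < m := by nlinarith [mul_nonneg (sq_nonneg L) (sqrt_nonneg n)]
  have hL : 0 < L := pos_of_mul_pos_right (by linarith) hm.le
  have hsn : √n ≤ n := (sqrt_le_left hn0.le).2 (by nlinarith)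
  have h3 : 256 ≤ m * L ^ 2 * n := h2.trans (by gcongr)
  have h4 : 65536 ≤ m ^ 2 * L ^ 4 * n := by
    have := pow_le_pow_left₀ (by norm_num) h2 2
    rw [mul_pow, sq_sqrt hn0.le] at this
    linarith
  have t1 : 32 * (m ^ 2 * L ^ 2) ≤ (m ^ 2 * L ^ 2) ^ 2 / 4 := by
    have : 65536 ≤ m ^ 2 * L ^ 2 := by nlinarith
    nlinarith
  have t2 : 32 * m ^ 2 / n ≤ (m ^ 2 * L ^ 2) ^ 2 / 4 := by
    rw [div_le_iff₀ hn0]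
    nlinarith [mul_le_mul_of_nonneg_left h4 (sq_nonneg m)]
  have t3 : 64 * (m ^ 3 * L ^ 3) ≤ (m ^ 2 * L ^ 2) ^ 2 / 4 := by
    nlinarith [mul_le_mul_of_nonneg_left h1 (pow_pos (mul_pos hm hL) 3).le]
  have t4 : 64 * (m ^ 3 * L ^ 2) / n ≤ (m ^ 2 * L ^ 2) ^ 2 / 4 := by
    rw [div_le_iff₀ hn0]
    nlinarith [mul_le_mul_of_nonneg_left h3 (mul_pos (pow_pos hm 3) (pow_pos hL 2)).le]
  have e : 16 * (2 * m ^ 2 * (L ^ 2 + 1 / n) + 4 * m ^ 3 * ((L + 1 / n) * L ^ 2)) =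
      32 * (m ^ 2 * L ^ 2) + 32 * m ^ 2 / n + 64 * (m ^ 3 * L ^ 3) + 64 * (m ^ 3 * L ^ 2) / n := by
    ring
  linarith

/-- **Mean/variance bounds for the chi-squared statistic in the soundness case.**
There is a universal constant `C > 0` such that if `‖q - U_n‖₂ ≥ ε/√n`, `m ≥ C √n/ε²`, and
`X i ~ Poi(m qᵢ)` are independent, then `Z = ∑ i ((Xᵢ - m/n)² - Xᵢ)` satisfies
`E[Z] ≥ 8m/√n` and `16 Var[Z] ≤ E[Z]²`. -/
theorem poisson_chi_squared_mean_variance_bound :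
    ∃ C : ℝ, 0 < C ∧ ∀ (n : ℕ) (q : Fin n → ℝ) (ε m : ℝ)
      (Ω : Type) [MeasurableSpace Ω] (μ : Measure Ω) [IsProbabilityMeasure μ]
      (X : Fin n → Ω → ℕ),
      1 ≤ n → IsDist q → 0 < ε → ε < 1 →
      ε / Real.sqrt n ≤ L2Dist q (unif n) →
      C * Real.sqrt n / ε ^ 2 ≤ m →
      (∀ i, Measurable (X i)) →
      iIndepFun X μ →
      (∀ i, μ.map (X i) = poissonMeasure (m * q i).toNNReal) →
      8 * m / Real.sqrt n ≤ ∫ ω, ∑ i, (((X i ω : ℝ) - m / n) ^ 2 - (X i ω : ℝ)) ∂μ ∧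
      16 * variance (fun ω => ∑ i, (((X i ω : ℝ) - m / n) ^ 2 - (X i ω : ℝ))) μ ≤
        (∫ ω, ∑ i, (((X i ω : ℝ) - m / n) ^ 2 - (X i ω : ℝ)) ∂μ) ^ 2 := by
  refine ⟨256, by norm_num, ?_⟩
  intro n q ε m Ω _ μ _ X hn hq hε hε1 hL2 hm hmeas hindep hmap
  have hn' : (1 : ℝ) ≤ n := by exact_mod_cast hn
  obtain ⟨hmL, hmLn⟩ := chiSq_rate_bounds hn' hε hε1 hL2 hm
  have hm0 : 0 ≤ m := (by positivity : (0 : ℝ) ≤ 256 * √n / ε ^ 2).trans hm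
  have hlaw : ∀ i, HasLaw (X i) (poissonMeasure (m * q i).toNNReal) μ :=
    fun i => ⟨(hmeas i).aemeasurable, hmap i⟩
  have hrate : ∀ i, ((m * q i).toNNReal : ℝ) = m * q i :=
    fun i => Real.coe_toNNReal _ (mul_nonneg hm0 (hq.1 i))
  change 8 * m / √n ≤ ∫ ω, ∑ i, chiSqTerm (m / n) (X i ω) ∂μ ∧
    16 * variance (fun ω => ∑ i, chiSqTerm (m / n) (X i ω)) μ ≤
      (∫ ω, ∑ i, chiSqTerm (m / n) (X i ω) ∂μ) ^ 2
  rw [integral_sum_chiSqTerm _ hlaw, variance_sum_chiSqTerm _ hlaw hindep]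
  simp only [hrate, sum_sq_mul_sub_div_eq]
  constructor
  · rw [div_le_iff₀ (by positivity)]
    nlinarith [mul_le_mul_of_nonneg_left hmLn hm0]
  · calc 16 * ∑ i, (2 * (m * q i) ^ 2 + 4 * (m * q i) * (m * q i - m / n) ^ 2)
        ≤ 16 * (2 * m ^ 2 * (L2Dist q (unif n) ^ 2 + 1 / n) +
            4 * m ^ 3 * ((L2Dist q (unif n) + 1 / n) * L2Dist q (unif n) ^ 2)) := by
          gcongr
          exact sum_chiSq_variance_le q hm0 hq.2
      _ ≤ _ := sixteen_mul_chiSq_variance_bound_le hn' hmL hmLn
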